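/- (Fu–Lascoux identity) For all positive integers n, m, real or formal x, and q with denominators nonzero: the sum over chains n ≥ i_1 ≥ ... ≥ i_m ≥ 1 of (-1)^{i_m - 1}(x^{i_m} - (-1)^{i_m}) ∏_{j=1}^m q^{i_j}/(1 - q^{i_j}) equals the sum over r from 1 to n of [n choose r]_q · (-1)^{r-1} x^r (-x^{-1}; q)_r q^{m r} / (1 - q^r)^m. -/

import Mathlib

noncomputable def qPoch (q a : ℝ) (n : ℕ) : ℝ := ∏ j ∈ Finset.range n, (1 - a * q ^ j)

noncomputable def qBinom (q : ℝ) (n r : ℕ) : ℝ :=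
  if r ≤ n then qPoch q q n / (qPoch q q r * qPoch q q (n - r)) else 0

/-- Multiple sum over chains `top ≥ i₁ ≥ ⋯ ≥ i_m ≥ 1` of
`(-1)^{i_m-1}(x^{i_m} - (-1)^{i_m}) ∏ q^{i_j}/(1-q^{i_j})`. -/
noncomputable def flSum (q x : ℝ) : ℕ → ℕ → ℝ
  | 0, top => (-1) ^ (top - 1) * (x ^ top - (-1 : ℝ) ^ top)
  | m + 1, top => ∑ i ∈ Finset.Icc 1 top, q ^ i / (1 - q ^ i) * flSum q x m i

/-!
Write `T_m(r) = (-1)^(r-1) ∏_{j<r} (x + q^j) (q^r/(1-q^r))^m`, so that the right-hand side is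
`∑_r [n, r]_q T_m(r)`. Since the chain sum satisfies `S_{m+1}(n) = ∑_{i ≤ n} q^i/(1-q^i) S_m(i)`,
the induction step on `m` amounts to the summation formula
`∑_{1 ≤ i ≤ n} [i, r]_q q^i/(1-q^i) = [n, r]_q q^r/(1-q^r)` for `r ≥ 1`, which follows by induction
on `n` from `[n+1, r]_q (1 - q^(n+1-r)) = [n, r]_q (1 - q^(n+1))`. The base case `m = 0` is the
alternating q-binomial identity `∑_r (-1)^r [n, r]_q ∏_{j<r} (x + q^j) = (-x)^n`, which follows from
the q-Pascal rule by induction on `n`.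
-/

open Finset

section QBinomial

variable {q : ℝ}

lemma qPoch_zero (a : ℝ) : qPoch q a 0 = 1 := by simp [qPoch]

lemma qPoch_succ (a : ℝ) (k : ℕ) : qPoch q a (k + 1) = qPoch q a k * (1 - a * q ^ k) := by
  simp [qPoch, prod_range_succ]

lemma one_sub_mul_pow_ne_zero (hq : ∀ i : ℕ, 1 ≤ i → 1 - q ^ i ≠ 0) (k : ℕ) :
    1 - q * q ^ k ≠ 0 := by
  simpa [← pow_succ'] using hq (k + 1) (by omega)

lemma qPoch_self_ne_zero (hq : ∀ i : ℕ, 1 ≤ i → 1 - q ^ i ≠ 0) (k : ℕ) : qPoch q q k ≠ 0 :=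
  prod_ne_zero_iff.2 fun j _ => one_sub_mul_pow_ne_zero hq j

lemma pow_mul_qPoch_neg_inv {x : ℝ} (hx : x ≠ 0) (r : ℕ) :
    x ^ r * qPoch q (-x⁻¹) r = ∏ j ∈ range r, (x + q ^ j) := by
  rw [qPoch, ← card_range r, ← prod_const, card_range, ← prod_mul_distrib]
  refine prod_congr rfl fun j _ => ?_
  field_simp
  ring

lemma qBinom_of_eq_add {n r t : ℕ} (h : n = r + t) :
    qBinom q n r = qPoch q q n / (qPoch q q r * qPoch q q t) := by
  simp [qBinom, h]

lemma qBinom_of_lt {n r : ℕ} (h : n < r) : qBinom q n r = 0 := by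
  simp [qBinom, Nat.not_le.mpr h]

lemma qBinom_zero_right (hq : ∀ i : ℕ, 1 ≤ i → 1 - q ^ i ≠ 0) (n : ℕ) : qBinom q n 0 = 1 := by
  simp [qBinom, qPoch_zero, qPoch_self_ne_zero hq]

lemma qBinom_self (hq : ∀ i : ℕ, 1 ≤ i → 1 - q ^ i ≠ 0) (n : ℕ) : qBinom q n n = 1 := by
  simp [qBinom, qPoch_zero, qPoch_self_ne_zero hq]

lemma qBinom_succ_mul (hq : ∀ i : ℕ, 1 ≤ i → 1 - q ^ i ≠ 0) {n r : ℕ} (h : r ≤ n) :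
    qBinom q (n + 1) r * (1 - q ^ (n + 1 - r)) = qBinom q n r * (1 - q ^ (n + 1)) := by
  obtain ⟨t, rfl⟩ := Nat.exists_eq_add_of_le h
  rw [qBinom_of_eq_add (t := t + 1) (by omega), qBinom_of_eq_add rfl,
    show r + t + 1 - r = t + 1 by omega, qPoch_succ, qPoch_succ]
  have := qPoch_self_ne_zero hq r
  have := qPoch_self_ne_zero hq t
  have := one_sub_mul_pow_ne_zero hq t
  field_simp
  ring

lemma qBinom_succ_succ (hq : ∀ i : ℕ, 1 ≤ i → 1 - q ^ i ≠ 0) (n s : ℕ) :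
    qBinom q (n + 1) (s + 1) = q ^ (s + 1) * qBinom q n (s + 1) + qBinom q n s := by
  rcases lt_or_ge n (s + 1) with h | h
  · rcases Nat.lt_succ_iff_lt_or_eq.1 h with h | rfl
    · simp [qBinom_of_lt, h, show n < s + 1 by omega]
    · simp [qBinom_of_lt, qBinom_self hq]
  obtain ⟨t, rfl⟩ := Nat.exists_eq_add_of_le h
  rw [qBinom_of_eq_add (t := t + 1) (by omega), qBinom_of_eq_add rfl,
    qBinom_of_eq_add (t := t + 1) (by omega), qPoch_succ, qPoch_succ, qPoch_succ]
  have := qPoch_self_ne_zero hq s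
  have := qPoch_self_ne_zero hq t
  have := one_sub_mul_pow_ne_zero hq s
  have := one_sub_mul_pow_ne_zero hq t
  field_simp
  ring

lemma sum_Icc_qBinom_mul_of_le (f : ℕ → ℝ) {i n : ℕ} (h : i ≤ n) :
    ∑ r ∈ Icc 1 i, qBinom q i r * f r = ∑ r ∈ Icc 1 n, qBinom q i r * f r :=
  sum_subset (Icc_subset_Icc_right h) fun r hr hr' => by
    rw [qBinom_of_lt (by simp only [mem_Icc] at hr hr'; omega), zero_mul]

lemma sum_Icc_qBinom_mul_geom (hq : ∀ i : ℕ, 1 ≤ i → 1 - q ^ i ≠ 0) {r : ℕ} (hr : 1 ≤ r)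
    (n : ℕ) :
    ∑ i ∈ Icc 1 n, qBinom q i r * (q ^ i / (1 - q ^ i)) = qBinom q n r * (q ^ r / (1 - q ^ r)) := by
  rcases lt_or_ge n r with hnr | hrn
  · rw [qBinom_of_lt hnr, zero_mul]
    exact sum_eq_zero fun i hi => by
      rw [qBinom_of_lt (by simp only [mem_Icc] at hi; omega), zero_mul]
  induction n, hrn using Nat.le_induction with
  | base =>
    refine sum_eq_single_of_mem r (by simp [hr]) fun i hi hir => ?_
    rw [qBinom_of_lt (by simp only [mem_Icc] at hi; omega), zero_mul]
  | succ n hrn ih =>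
    rw [sum_Icc_succ_top (by omega), ih]
    have hratio := qBinom_succ_mul hq hrn
    have hsplit : q ^ (n + 1) = q ^ r * q ^ (n + 1 - r) := by rw [← pow_add]; congr 1; omega
    have := hq r hr
    have := hq (n + 1) (by omega)
    rw [hsplit] at hratio this ⊢
    field_simp
    linear_combination (-q ^ r) * hratio

lemma sum_range_neg_one_pow_mul_qBinom_mul_prod (hq : ∀ i : ℕ, 1 ≤ i → 1 - q ^ i ≠ 0)
    (x : ℝ) (n : ℕ) :
    ∑ r ∈ range (n + 1), (-1) ^ r * qBinom q n r * ∏ j ∈ range r, (x + q ^ j) = (-x) ^ n := by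
  induction n with
  | zero => simp [qBinom_self hq]
  | succ n ih =>
    set P : ℕ → ℝ := fun r => ∏ j ∈ range r, (x + q ^ j)
    set g : ℕ → ℝ := fun r => (-1) ^ r * q ^ r * qBinom q n r * P r
    have hpascal : ∀ s, (-1) ^ (s + 1) * qBinom q (n + 1) (s + 1) * P (s + 1)
        = (g (s + 1) - g s) + -x * ((-1) ^ s * qBinom q n s * P s) := fun s => by
      simp only [g, P, qBinom_succ_succ hq, prod_range_succ]
      ring
    rw [sum_range_succ', sum_congr rfl fun s _ => hpascal s, sum_add_distrib, sum_range_sub,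
      ← mul_sum, ih]
    simp only [g, P, qBinom_of_lt n.lt_succ_self, qBinom_zero_right hq, prod_range_zero]
    ring

end QBinomial

lemma flSum_eq_sum_qBinom {q : ℝ} (hq : ∀ i : ℕ, 1 ≤ i → 1 - q ^ i ≠ 0) (x : ℝ) (m : ℕ)
    {n : ℕ} (hn : 1 ≤ n) :
    flSum q x m n = ∑ r ∈ Icc 1 n, qBinom q n r *
      ((-1) ^ (r - 1) * (∏ j ∈ range r, (x + q ^ j)) * (q ^ r / (1 - q ^ r)) ^ m) := by
  induction m generalizing n with
  | zero =>
    have hgauss := sum_range_neg_one_pow_mul_qBinom_mul_prod hq x n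
    rw [sum_range_eq_add_Ico _ (by omega), Ico_add_one_right_eq_Icc] at hgauss
    simp only [qBinom_zero_right hq, prod_range_zero, pow_zero, mul_one] at hgauss
    have hterm : ∀ r ∈ Icc 1 n, qBinom q n r *
        ((-1) ^ (r - 1) * (∏ j ∈ range r, (x + q ^ j)) * (q ^ r / (1 - q ^ r)) ^ 0)
        = -((-1) ^ r * qBinom q n r * ∏ j ∈ range r, (x + q ^ j)) := fun r hr => by
      obtain ⟨s, rfl⟩ : ∃ s, r = s + 1 := ⟨r - 1, by rw [mem_Icc] at hr; omega⟩
      rw [Nat.add_sub_cancel]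
      ring
    obtain ⟨k, rfl⟩ : ∃ k, n = k + 1 := ⟨n - 1, by omega⟩
    have hsq : ((-1 : ℝ) ^ k) ^ 2 = 1 := by rw [← pow_mul, pow_mul', neg_one_sq, one_pow]
    rw [sum_congr rfl hterm, sum_neg_distrib, flSum, Nat.add_sub_cancel]
    linear_combination hgauss + hsq
  | succ m ih =>
    calc flSum q x (m + 1) n
        = ∑ i ∈ Icc 1 n, q ^ i / (1 - q ^ i) * ∑ r ∈ Icc 1 n, qBinom q i r *
            ((-1) ^ (r - 1) * (∏ j ∈ range r, (x + q ^ j)) * (q ^ r / (1 - q ^ r)) ^ m) := by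
          refine sum_congr rfl fun i hi => ?_
          rw [mem_Icc] at hi
          rw [ih hi.1, sum_Icc_qBinom_mul_of_le _ hi.2]
      _ = ∑ r ∈ Icc 1 n, (-1) ^ (r - 1) * (∏ j ∈ range r, (x + q ^ j)) *
            (q ^ r / (1 - q ^ r)) ^ m * ∑ i ∈ Icc 1 n, qBinom q i r * (q ^ i / (1 - q ^ i)) := by
          simp only [mul_sum]
          rw [sum_comm]
          exact sum_congr rfl fun r _ => sum_congr rfl fun i _ => by ring
      _ = _ := sum_congr rfl fun r hr => by
          rw [sum_Icc_qBinom_mul_geom hq (mem_Icc.1 hr).1, pow_succ]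
          ring

theorem fu_lascoux_general (q x : ℝ) (n m : ℕ) (hn : 0 < n) (hx : x ≠ 0)
    (hden : ∀ i : ℕ, 1 ≤ i → 1 - q ^ i ≠ 0) :
    flSum q x m n =
      ∑ r ∈ Finset.Icc 1 n,
        qBinom q n r * ((-1) ^ (r - 1) * x ^ r * qPoch q (-x⁻¹) r * q ^ (m * r) /
          (1 - q ^ r) ^ m) := by
  rw [flSum_eq_sum_qBinom hden x m hn]
  refine sum_congr rfl fun r _ => ?_
  rw [← pow_mul_qPoch_neg_inv hx, div_pow, ← pow_mul, mul_comm r m]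
  ring

/-- The Fu–Lascoux identity. -/
theorem fu_lascoux (q x : ℝ) (n m : ℕ) (hn : 0 < n) (hm : 0 < m) (hx : x ≠ 0)
    (hden : ∀ i : ℕ, 1 ≤ i → 1 - q ^ i ≠ 0) :
    flSum q x m n =
      ∑ r ∈ Finset.Icc 1 n,
        qBinom q n r * ((-1) ^ (r - 1) * x ^ r * qPoch q (-x⁻¹) r * q ^ (m * r) /
          (1 - q ^ r) ^ m) :=
  fu_lascoux_general q x n m hn hx hden
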